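/- arXiv:1401.5455 — 2 statements merged into one kernel-verified Lean document; each statement's English description precedes it below -/
import Mathlib

section
/- Let d = 1 and let b : [0,1] × ℝ → ℝ be Borel measurable with ‖b‖_∞ ≤ 1. Then E exp( (1/16) ( ∫₀¹ b(1−t, W_{1−t}) · W_{1−t}/(2 − 2t) dt )² ) ≤ C₂, where C₂ := E ∫₀¹ exp( |W_{1−t}|²/(4(1−t)) ) dt/(2√(1−t)) is a finite universal constant. -/
open MeasureTheory ProbabilityTheory Set

noncomputable section

/-- A standard one-dimensional Brownian motion on a probability space. -/
structure IsBrownianMotion1D {Ω : Type*} [MeasurableSpace Ω] (P : Measure Ω)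
    (W : Ω → ℝ → ℝ) : Prop where
  meas : ∀ t : ℝ, Measurable fun ω => W ω t
  init : ∀ᵐ ω ∂P, W ω 0 = 0
  cont : ∀ᵐ ω ∂P, Continuous (W ω)
  incr_law : ∀ s t : ℝ, 0 ≤ s → s ≤ t →
    Measure.map (fun ω => W ω t - W ω s) P = gaussianReal 0 (Real.toNNReal (t - s))
  indep_incr : ∀ (n : ℕ) (t : Fin (n + 1) → ℝ), Monotone t → 0 ≤ t 0 →
    iIndepFun
      (fun (i : Fin n) ω => W ω (t i.succ) - W ω (t i.castSucc)) P

/-!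
Pathwise, `∫₀¹ c x / (2 - 2t) dt = ∫₀¹ f w dt` with the probability density `w t = 1 / (2√(1-t))`
on `[0, 1]` and `f = c x / √(1-t)`. Jensen's inequality for `y ↦ exp (y² / 16)` bounds the
exponential of the squared integral by `∫ exp (f² / 16) w ≤ ∫ exp (x² / (4(1-t))) w`, using
`|c| ≤ 1`; integrating over `ω` gives the inequality. For finiteness, Tonelli and
`W_{1-t} ∼ N(0, 1-t)` give `E exp (W_{1-t}² / (4(1-t))) = √2` for `t < 1`, so `C₂ = √2`.
-/

open Real
open scoped ENNReal NNReal

theorem exp_mul_sq_mul_one_add_le {a : ℝ} (ha : 0 ≤ a) (m x : ℝ) :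
    exp (a * m ^ 2) * (1 + 2 * a * m * (x - m)) ≤ exp (a * x ^ 2) := by
  have h_tangent : 2 * a * m * (x - m) ≤ a * x ^ 2 - a * m ^ 2 := by
    nlinarith [mul_nonneg ha (sq_nonneg (x - m))]
  calc exp (a * m ^ 2) * (1 + 2 * a * m * (x - m))
      ≤ exp (a * m ^ 2) * exp (a * x ^ 2 - a * m ^ 2) := by
        gcongr
        linarith [add_one_le_exp (a * x ^ 2 - a * m ^ 2)]
    _ = exp (a * x ^ 2) := by rw [← exp_add]; ring_nf

theorem ofReal_integral_le_lintegral_ofReal {α : Type*} [MeasurableSpace α] {μ : Measure α}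
    {f : α → ℝ} (hf : Integrable f μ) :
    ENNReal.ofReal (∫ x, f x ∂μ) ≤ ∫⁻ x, ENNReal.ofReal (f x) ∂μ := by
  refine le_trans (ENNReal.ofReal_le_ofReal ?_) ENNReal.ofReal_toReal_le
  rw [integral_eq_lintegral_pos_part_sub_lintegral_neg_part hf]
  linarith [ENNReal.toReal_nonneg (a := ∫⁻ x, ENNReal.ofReal (-f x) ∂μ)]

/-- Jensen's inequality for `y ↦ exp (a y²)`, proved with the tangent line at the mean so that
`exp (a f²) w` need not be integrable. If `f w` is not integrable, the left side is `exp 0 = 1`. -/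
theorem ofReal_exp_mul_sq_integral_mul_le {α : Type*} [MeasurableSpace α] {μ : Measure α}
    {a : ℝ} (ha : 0 ≤ a) {w : α → ℝ} (hw_nonneg : ∀ x, 0 ≤ w x) (hw : Integrable w μ)
    (hw_one : ∫ x, w x ∂μ = 1) (f : α → ℝ) :
    ENNReal.ofReal (exp (a * (∫ x, f x * w x ∂μ) ^ 2))
      ≤ ∫⁻ x, ENNReal.ofReal (exp (a * f x ^ 2) * w x) ∂μ := by
  by_cases hfw : Integrable (fun x => f x * w x) μ
  · set m := ∫ x, f x * w x ∂μ
    set h : α → ℝ := fun x => exp (a * m ^ 2) * (w x + 2 * a * m * (f x * w x - m * w x))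
    have h_dev : Integrable (fun x => f x * w x - m * w x) μ := hfw.sub (hw.const_mul m)
    have h_int : Integrable h μ := (hw.add (h_dev.const_mul _)).const_mul _
    have h_integral : ∫ x, h x ∂μ = exp (a * m ^ 2) := by
      simp only [h]
      rw [integral_const_mul, integral_add hw (h_dev.const_mul _),
        integral_const_mul, integral_sub hfw (hw.const_mul m), integral_const_mul, hw_one]
      ring
    have h_le (x : α) : h x ≤ exp (a * f x ^ 2) * w x := by
      calc h x = exp (a * m ^ 2) * (1 + 2 * a * m * (f x - m)) * w x := by ring
        _ ≤ exp (a * f x ^ 2) * w x :=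
          mul_le_mul_of_nonneg_right (exp_mul_sq_mul_one_add_le ha m (f x)) (hw_nonneg x)
    calc ENNReal.ofReal (exp (a * m ^ 2)) = ENNReal.ofReal (∫ x, h x ∂μ) := by rw [h_integral]
      _ ≤ ∫⁻ x, ENNReal.ofReal (h x) ∂μ := ofReal_integral_le_lintegral_ofReal h_int
      _ ≤ _ := lintegral_mono fun x => ENNReal.ofReal_le_ofReal (h_le x)
  · rw [integral_undef hfw]
    calc ENNReal.ofReal (exp (a * 0 ^ 2)) = ∫⁻ x, ENNReal.ofReal (w x) ∂μ := by
          rw [← ofReal_integral_eq_lintegral_ofReal hw (ae_of_all _ hw_nonneg), hw_one]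
          simp
      _ ≤ _ := lintegral_mono fun x => ENNReal.ofReal_le_ofReal
          (le_mul_of_one_le_left (hw_nonneg x) (one_le_exp (by positivity)))

theorem hasDerivAt_neg_sqrt_one_sub {t : ℝ} (ht : t < 1) :
    HasDerivAt (fun t => -√(1 - t)) (1 / (2 * √(1 - t))) t := by
  have h := (((hasDerivAt_id t).const_sub 1).sqrt (sub_ne_zero.2 ht.ne')).neg
  simp only [id, neg_div, neg_neg] at h
  exact h

theorem integrableOn_one_div_two_mul_sqrt_one_sub :
    IntegrableOn (fun t => 1 / (2 * √(1 - t))) (Icc 0 1) := by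
  rw [integrableOn_Icc_iff_integrableOn_Ioc]
  exact intervalIntegral.integrableOn_deriv_of_nonneg (by fun_prop)
    (fun t ht => hasDerivAt_neg_sqrt_one_sub ht.2) (fun t _ => by positivity)

theorem integral_one_div_two_mul_sqrt_one_sub :
    ∫ t in Icc 0 1, 1 / (2 * √(1 - t)) = 1 := by
  rw [integral_Icc_eq_integral_Ioc, ← intervalIntegral.integral_of_le zero_le_one,
    intervalIntegral.integral_eq_sub_of_hasDerivAt_of_le zero_le_one (by fun_prop)
      (fun t ht => hasDerivAt_neg_sqrt_one_sub ht.2)]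
  · simp
  · exact (intervalIntegrable_iff_integrableOn_Icc_of_le zero_le_one).2
      integrableOn_one_div_two_mul_sqrt_one_sub

theorem lintegral_one_div_two_mul_sqrt_one_sub :
    ∫⁻ t in Icc 0 1, ENNReal.ofReal (1 / (2 * √(1 - t))) = 1 := by
  rw [← ofReal_integral_eq_lintegral_ofReal integrableOn_one_div_two_mul_sqrt_one_sub
    (ae_of_all _ fun t => by positivity), integral_one_div_two_mul_sqrt_one_sub, ENNReal.ofReal_one]

theorem ofReal_exp_sq_intervalIntegral_le {x c : ℝ → ℝ} (hc : ∀ t ∈ Icc (0 : ℝ) 1, |c t| ≤ 1) :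
    ENNReal.ofReal (exp ((1 / 16) * (∫ t in (0 : ℝ)..1, c t * x t / (2 - 2 * t)) ^ 2))
      ≤ ∫⁻ t in Icc (0 : ℝ) 1,
          ENNReal.ofReal (exp (x t ^ 2 / (4 * (1 - t))) / (2 * √(1 - t))) := by
  set w : ℝ → ℝ := fun t => 1 / (2 * √(1 - t))
  set f : ℝ → ℝ := fun t => c t * x t / √(1 - t)
  have h_factor : ∀ t ∈ Icc (0 : ℝ) 1, c t * x t / (2 - 2 * t) = f t * w t := by
    intro t ht
    simp only [f, w]
    rw [div_mul_div_comm, mul_one, mul_left_comm, mul_self_sqrt (by linarith [ht.2])]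
    ring_nf
  have h_bound : ∀ t ∈ Icc (0 : ℝ) 1, exp (1 / 16 * f t ^ 2) * w t
      ≤ exp (x t ^ 2 / (4 * (1 - t))) / (2 * √(1 - t)) := by
    intro t ht
    have h_sq : f t ^ 2 = c t ^ 2 * (x t ^ 2 / (1 - t)) := by
      simp only [f]
      rw [div_pow, mul_pow, sq_sqrt (by linarith [ht.2])]
      ring
    have hc_sq : c t ^ 2 ≤ 1 := sq_le_one_iff_abs_le_one _ |>.2 (hc t ht)
    have hx_nonneg : 0 ≤ x t ^ 2 / (1 - t) := div_nonneg (sq_nonneg _) (by linarith [ht.2])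
    rw [div_eq_mul_one_div (exp _)]
    gcongr
    rw [h_sq, div_mul_eq_div_div_swap]
    nlinarith
  have h_integral : ∫ t in (0 : ℝ)..1, c t * x t / (2 - 2 * t)
      = ∫ t in Icc (0 : ℝ) 1, f t * w t := by
    rw [intervalIntegral.integral_of_le zero_le_one, ← integral_Icc_eq_integral_Ioc]
    exact setIntegral_congr_fun measurableSet_Icc h_factor
  rw [h_integral]
  calc _ ≤ ∫⁻ t in Icc (0 : ℝ) 1, ENNReal.ofReal (exp (1 / 16 * f t ^ 2) * w t) :=
        ofReal_exp_mul_sq_integral_mul_le (by norm_num) (fun t => by positivity)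
          integrableOn_one_div_two_mul_sqrt_one_sub integral_one_div_two_mul_sqrt_one_sub f
    _ ≤ _ := setLIntegral_mono_ae' measurableSet_Icc
        (ae_of_all _ fun t ht => ENNReal.ofReal_le_ofReal (h_bound t ht))

theorem lintegral_exp_sq_div_four_mul_gaussianReal {v : ℝ≥0} (hv : v ≠ 0) :
    ∫⁻ y, ENNReal.ofReal (exp (y ^ 2 / (4 * v))) ∂gaussianReal 0 v = ENNReal.ofReal √2 := by
  have hv_pos : (0 : ℝ) < v := by positivity
  have h_density (y : ℝ) : gaussianPDF 0 v y * ENNReal.ofReal (exp (y ^ 2 / (4 * v)))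
      = ENNReal.ofReal ((√(2 * π * v))⁻¹ * exp (-(1 / (4 * v)) * y ^ 2)) := by
    rw [gaussianPDF, gaussianPDFReal, ← ENNReal.ofReal_mul (by positivity), mul_assoc,
      ← exp_add]
    congr 3
    field_simp
    ring
  rw [gaussianReal_of_var_ne_zero _ hv,
    lintegral_withDensity_eq_lintegral_mul _ (measurable_gaussianPDF _ _) (by fun_prop)]
  simp only [Pi.mul_apply, h_density]
  rw [← ofReal_integral_eq_lintegral_ofReal
      ((integrable_exp_neg_mul_sq (by positivity)).const_mul _)
      (ae_of_all _ fun y => by positivity),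
    integral_const_mul, integral_gaussian]
  congr 1
  rw [← sqrt_inv, ← sqrt_mul (by positivity)]
  congr 1
  field_simp
  ring

theorem aemeasurable_uncurry_of_ae_continuous {Ω : Type*} [MeasurableSpace Ω] {μ : Measure Ω}
    {ν : Measure ℝ} [SFinite ν] {X : Ω → ℝ → ℝ} (hX_meas : ∀ t, Measurable fun ω => X ω t)
    (hX_cont : ∀ᵐ ω ∂μ, Continuous (X ω)) :
    AEMeasurable (Function.uncurry X) (μ.prod ν) := by
  classical
  obtain ⟨S, h_sub, hS, hS_null⟩ := exists_measurable_superset_of_null (ae_iff.1 hX_cont)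
  set Y : Ω → ℝ → ℝ := fun ω t => if ω ∈ S then 0 else X ω t
  have hY : Measurable (Function.uncurry Y) := by
    have h_cont (ω : Ω) : Continuous (Y ω) := by
      by_cases hω : ω ∈ S
      · simpa only [Y, if_pos hω] using continuous_const
      · simpa only [Y, if_neg hω] using not_not.1 fun h => hω (h_sub h)
    exact (measurable_uncurry_of_continuous_of_measurable (u := fun t ω => Y ω t) h_cont
      fun t => Measurable.ite hS measurable_const (hX_meas t)).comp measurable_swap
  refine ⟨Function.uncurry Y, hY, ?_⟩
  have h_notMem : ∀ᵐ ω ∂μ, ω ∉ S := measure_eq_zero_iff_ae_notMem.1 hS_null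
  filter_upwards [Measure.quasiMeasurePreserving_fst.ae h_notMem] with p hp
  simp only [Function.uncurry, Y, if_neg hp]

namespace IsBrownianMotion1D

variable {Ω : Type*} [MeasurableSpace Ω] {P : Measure Ω} {W : Ω → ℝ → ℝ}

theorem map_eq_gaussianReal (hW : IsBrownianMotion1D P W) {t : ℝ} (ht : 0 ≤ t) :
    P.map (fun ω => W ω t) = gaussianReal 0 t.toNNReal := by
  rw [← sub_zero t, ← hW.incr_law 0 t le_rfl ht]
  refine Measure.map_congr ?_
  filter_upwards [hW.init] with ω hω
  simp [hω]

theorem lintegral_exp_sq_div_four_mul (hW : IsBrownianMotion1D P W) {s : ℝ} (hs : 0 < s) :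
    ∫⁻ ω, ENNReal.ofReal (exp (W ω s ^ 2 / (4 * s))) ∂P = ENNReal.ofReal √2 := by
  have h := lintegral_exp_sq_div_four_mul_gaussianReal (v := s.toNNReal) (by simpa using hs)
  rw [Real.coe_toNNReal _ hs.le, ← hW.map_eq_gaussianReal hs.le,
    lintegral_map (by fun_prop) (hW.meas s)] at h
  exact h

theorem lintegral_lintegral_exp_sq_div_eq_sqrt_two [SFinite P] (hW : IsBrownianMotion1D P W) :
    ∫⁻ ω, (∫⁻ t in Icc (0 : ℝ) 1,
        ENNReal.ofReal (exp (W ω (1 - t) ^ 2 / (4 * (1 - t))) / (2 * √(1 - t)))) ∂P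
      = ENNReal.ofReal √2 := by
  have h_meas : AEMeasurable (Function.uncurry fun ω t =>
      ENNReal.ofReal (exp (W ω (1 - t) ^ 2 / (4 * (1 - t))) / (2 * √(1 - t))))
      (P.prod ((volume : Measure ℝ).restrict (Icc 0 1))) := by
    have h_rev := aemeasurable_uncurry_of_ae_continuous
      (ν := (volume : Measure ℝ).restrict (Icc 0 1)) (X := fun ω t => W ω (1 - t))
      (fun t => hW.meas (1 - t))
      (hW.cont.mono fun ω h => h.comp (continuous_const.sub continuous_id))
    have h_outer : Measurable fun q : ℝ × ℝ =>
        ENNReal.ofReal (exp (q.1 ^ 2 / (4 * (1 - q.2))) / (2 * √(1 - q.2))) := by fun_prop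
    exact (h_outer.comp_aemeasurable (h_rev.prodMk measurable_snd.aemeasurable) :)
  have h_inner : ∀ t ∈ Ico (0 : ℝ) 1,
      ∫⁻ ω, ENNReal.ofReal (exp (W ω (1 - t) ^ 2 / (4 * (1 - t))) / (2 * √(1 - t))) ∂P
        = ENNReal.ofReal √2 * ENNReal.ofReal (1 / (2 * √(1 - t))) := by
    intro t ht
    simp_rw [div_eq_mul_one_div (exp _), ENNReal.ofReal_mul (exp_pos _).le]
    rw [lintegral_mul_const' _ _ ENNReal.ofReal_ne_top,
      hW.lintegral_exp_sq_div_four_mul (by linarith [ht.2])]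
  rw [lintegral_lintegral_swap h_meas, ← setLIntegral_congr Ico_ae_eq_Icc,
    setLIntegral_congr_fun measurableSet_Ico h_inner,
    lintegral_const_mul' _ _ ENNReal.ofReal_ne_top, setLIntegral_congr Ico_ae_eq_Icc,
    lintegral_one_div_two_mul_sqrt_one_sub, mul_one]

end IsBrownianMotion1D

theorem exp_estimate_I2_general {Ω : Type*} [MeasurableSpace Ω] (P : Measure Ω)
    [IsProbabilityMeasure P] (W : Ω → ℝ → ℝ) (hW : IsBrownianMotion1D P W)
    (b : ℝ → ℝ → ℝ)
    (hb_bdd : ∀ t ∈ Icc (0 : ℝ) 1, ∀ x, |b t x| ≤ 1) :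
    (∫⁻ ω, ENNReal.ofReal
        (Real.exp ((1 / 16) *
          (∫ t in (0 : ℝ)..1, b (1 - t) (W ω (1 - t)) * W ω (1 - t) / (2 - 2 * t)) ^ 2)) ∂P)
      ≤ ∫⁻ ω, (∫⁻ t in Icc (0 : ℝ) 1, ENNReal.ofReal
          (Real.exp ((W ω (1 - t)) ^ 2 / (4 * (1 - t))) / (2 * Real.sqrt (1 - t))) ∂volume) ∂P ∧
    (∫⁻ ω, (∫⁻ t in Icc (0 : ℝ) 1, ENNReal.ofReal
        (Real.exp ((W ω (1 - t)) ^ 2 / (4 * (1 - t))) / (2 * Real.sqrt (1 - t))) ∂volume) ∂P)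
      < ⊤ := by
  refine ⟨lintegral_mono fun ω => ofReal_exp_sq_intervalIntegral_le fun t ht =>
    hb_bdd (1 - t) ⟨by linarith [ht.2], by linarith [ht.1]⟩ _, ?_⟩
  rw [hW.lintegral_lintegral_exp_sq_div_eq_sqrt_two]
  exact ENNReal.ofReal_lt_top

/-- For `d = 1` and Borel measurable `b` with `‖b‖_∞ ≤ 1`,
`E exp ((1/16) (∫_0^1 b (1-t, W_{1-t}) W_{1-t} / (2 - 2t) dt)²) ≤ C₂` where
`C₂ = E ∫_0^1 exp (|W_{1-t}|² / (4(1-t))) dt / (2√(1-t))` is a finite universal constant. -/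
theorem exp_estimate_I2 {Ω : Type*} [MeasurableSpace Ω] (P : Measure Ω)
    [IsProbabilityMeasure P] (W : Ω → ℝ → ℝ) (hW : IsBrownianMotion1D P W)
    (b : ℝ → ℝ → ℝ) (hb_meas : Measurable (Function.uncurry b))
    (hb_bdd : ∀ t ∈ Icc (0 : ℝ) 1, ∀ x, |b t x| ≤ 1) :
    (∫⁻ ω, ENNReal.ofReal
        (Real.exp ((1 / 16) *
          (∫ t in (0 : ℝ)..1, b (1 - t) (W ω (1 - t)) * W ω (1 - t) / (2 - 2 * t)) ^ 2)) ∂P)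
      ≤ ∫⁻ ω, (∫⁻ t in Icc (0 : ℝ) 1, ENNReal.ofReal
          (Real.exp ((W ω (1 - t)) ^ 2 / (4 * (1 - t))) / (2 * Real.sqrt (1 - t))) ∂volume) ∂P ∧
    (∫⁻ ω, (∫⁻ t in Icc (0 : ℝ) 1, ENNReal.ofReal
        (Real.exp ((W ω (1 - t)) ^ 2 / (4 * (1 - t))) / (2 * Real.sqrt (1 - t))) ∂volume) ∂P)
      < ⊤ :=
  exp_estimate_I2_general P W hW b hb_bdd
end
end

section
/- Let b : [0,T] × ℝ^d → ℝ^d be Borel measurable and suppose: there exists M₁ ∈ L^{q₁}([0,T], ℝ) with |b(t,x)| ≤ M₁(t) for all t, x, and there exist M₂ ∈ L^{q₂}([0,T], ℝ) and β > 0 with |b(t,x) − b(t,y)| ≤ M₂(t) |x − y|^β for all t, x, y; let 1/p₁ + 1/q₁ = 1 and 1/p₂ + 1/q₂ = 1 with q₁, q₂ > 1. Then for any continuous path w, any 0 ≤ u ≤ r ≤ T, and any two continuous functions Y, Z : [u,r] → ℝ^d with Y_u = Z_u that both satisfy X_t = X_u + (w_t − w_u) + ∫_u^t b(s, X_s) ds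 on [u,r], one has |Y_r − Z_r| ≤ (2‖M₁‖_{L^{q₁}[0,T]})^β ‖M₂‖_{L^{q₂}[0,T]} (r − u)^{β/p₁ + 1/p₂}. -/
open MeasureTheory Set
open scoped ENNReal

/-!
Subtracting the two integral equations, `Y t - Z t = ∫_u^t (b(s, Y s) - b(s, Z s)) ds`.
Bounding the integrand by `2 M₁` and applying Hölder's inequality gives the a priori bound
`‖Y t - Z t‖ ≤ 2 ‖M₁‖_{q₁} (r - u)^{1/p₁}` on `[u, r]`. Feeding this into the Hölder
continuity `‖b(s, Y s) - b(s, Z s)‖ ≤ M₂ s ‖Y s - Z s‖^β` and applying Hölder's inequality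
once more, now to `M₂`, gives the claim.
-/

lemma one_div_pos_of_one_div_add_one_div_eq_one {p q : ℝ} (hq : 1 < q)
    (hpq : 1 / p + 1 / q = 1) : 0 < 1 / p := by
  have : 1 / q < 1 := (div_lt_one (by linarith)).2 hq
  linarith

lemma setIntegral_norm_le_eLpNorm_mul_measure_rpow {α E : Type*} [MeasurableSpace α]
    [NormedAddCommGroup E] {μ : Measure α} {s t : Set α} (hst : s ⊆ t) {p q : ℝ} (hq : 1 ≤ q)
    (hpq : 1 / p + 1 / q = 1) {f : α → E} (hf : MemLp f (ENNReal.ofReal q) (μ.restrict t))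
    (hs : μ s ≠ ∞) :
    ∫ x in s, ‖f x‖ ∂μ ≤
      (eLpNorm f (ENNReal.ofReal q) (μ.restrict t)).toReal * (μ s).toReal ^ (1 / p) := by
  have hfs : MemLp f (ENNReal.ofReal q) (μ.restrict s) :=
    hf.mono_measure (Measure.restrict_mono hst le_rfl)
  have hexp : 1 / (1 : ℝ≥0∞).toReal - 1 / (ENNReal.ofReal q).toReal = 1 / p := by
    rw [ENNReal.toReal_ofReal (by linarith)]; simp only [ENNReal.toReal_one]; linarith
  have hholder : eLpNorm f 1 (μ.restrict s) ≤
      eLpNorm f (ENNReal.ofReal q) (μ.restrict t) * μ s ^ (1 / p) := by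
    have h := eLpNorm_le_eLpNorm_mul_rpow_measure_univ (ENNReal.one_le_ofReal.2 hq) hfs.1
    rw [Measure.restrict_apply_univ, hexp] at h
    exact h.trans (by gcongr)
  have hp : 0 ≤ 1 / p := by linarith [(div_le_one (by linarith : (0 : ℝ) < q)).2 hq]
  calc ∫ x in s, ‖f x‖ ∂μ = (eLpNorm f 1 (μ.restrict s)).toReal := by
        rw [integral_norm_eq_lintegral_enorm hfs.1, eLpNorm_one_eq_lintegral_enorm]
    _ ≤ (eLpNorm f (ENNReal.ofReal q) (μ.restrict t) * μ s ^ (1 / p)).toReal :=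
        ENNReal.toReal_mono (ENNReal.mul_ne_top hf.2.ne (ENNReal.rpow_ne_top_of_nonneg hp hs))
          hholder
    _ = _ := by rw [ENNReal.toReal_mul, ← ENNReal.toReal_rpow]

lemma norm_setIntegral_Ioc_le_of_norm_le_mul {E : Type*} [NormedAddCommGroup E]
    [NormedSpace ℝ E] {F : ℝ → E} {M : ℝ → ℝ} {T a c p q K : ℝ} (hq : 1 ≤ q)
    (hpq : 1 / p + 1 / q = 1) (hM : MemLp M (ENNReal.ofReal q) (volume.restrict (Icc 0 T)))
    (ha : 0 ≤ a) (hac : a ≤ c) (hc : c ≤ T) (hK : 0 ≤ K)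
    (hF : ∀ s ∈ Ioc a c, ‖F s‖ ≤ K * ‖M s‖) :
    ‖∫ s in Ioc a c, F s‖ ≤
      K * (eLpNorm M (ENNReal.ofReal q) (volume.restrict (Icc 0 T))).toReal *
        (c - a) ^ (1 / p) := by
  have hsub : Ioc a c ⊆ Icc 0 T := fun s hs => ⟨ha.trans hs.1.le, hs.2.trans hc⟩
  have hM_int : IntegrableOn M (Ioc a c) :=
    (hM.mono_measure (Measure.restrict_mono hsub le_rfl)).integrable (ENNReal.one_le_ofReal.2 hq)
  have hholder := setIntegral_norm_le_eLpNorm_mul_measure_rpow hsub hq hpq hM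
    (by simp [Real.volume_Ioc])
  rw [Real.volume_Ioc, ENNReal.toReal_ofReal (by linarith)] at hholder
  calc ‖∫ s in Ioc a c, F s‖ ≤ ∫ s in Ioc a c, K * ‖M s‖ :=
        norm_integral_le_of_norm_le (hM_int.norm.const_mul K)
          ((ae_restrict_iff' measurableSet_Ioc).2 (ae_of_all _ hF))
    _ = K * ∫ s in Ioc a c, ‖M s‖ := integral_const_mul K _
    _ ≤ _ := by rw [mul_assoc]; gcongr

lemma integrableOn_comp_of_continuousOn_of_norm_le {E F : Type*} [NormedAddCommGroup E]
    [MeasurableSpace E] [BorelSpace E] [NormedAddCommGroup F] [MeasurableSpace F] [BorelSpace F]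
    [SecondCountableTopology F] {b : ℝ → E → F} (hb : Measurable (Function.uncurry b))
    {M : ℝ → ℝ} {s : Set ℝ} (hs : MeasurableSet s) (hM : IntegrableOn M s)
    (hbM : ∀ t ∈ s, ∀ x, ‖b t x‖ ≤ M t) {X : ℝ → E} (hX : ContinuousOn X s) :
    IntegrableOn (fun t => b t (X t)) s := by
  have hmeas : AEStronglyMeasurable (fun t => b t (X t)) (volume.restrict s) :=
    (hb.comp_aemeasurable (aemeasurable_id.prodMk (hX.aemeasurable hs))).aestronglyMeasurable
  exact hM.mono' hmeas ((ae_restrict_iff' hs).2 (ae_of_all _ fun t ht => hbM t ht (X t)))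

lemma sub_eq_setIntegral_Ioc_of_eq_add_integral {E : Type*} [NormedAddCommGroup E]
    [NormedSpace ℝ E] {Y Z w f g : ℝ → E} {u t : ℝ} (hut : u ≤ t)
    (hf : IntegrableOn f (Ioc u t)) (hg : IntegrableOn g (Ioc u t))
    (hY : Y t = Y u + (w t - w u) + ∫ s in u..t, f s)
    (hZ : Z t = Z u + (w t - w u) + ∫ s in u..t, g s) (h_init : Y u = Z u) :
    Y t - Z t = ∫ s in Ioc u t, (f s - g s) := by
  rw [hY, hZ, h_init, intervalIntegral.integral_of_le hut, intervalIntegral.integral_of_le hut,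
    integral_sub hf hg]
  abel

lemma solutions_sub_eq_setIntegral_Ioc {E : Type*} [NormedAddCommGroup E] [NormedSpace ℝ E]
    [MeasurableSpace E] [BorelSpace E] [SecondCountableTopology E] {b : ℝ → E → E}
    (hb : Measurable (Function.uncurry b)) {M : ℝ → ℝ} {u r : ℝ} (hM : IntegrableOn M (Icc u r))
    (hbM : ∀ t ∈ Icc u r, ∀ x, ‖b t x‖ ≤ M t) {w Y Z : ℝ → E}
    (hY_cont : ContinuousOn Y (Icc u r)) (hZ_cont : ContinuousOn Z (Icc u r))
    (h_init : Y u = Z u)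
    (hY_sol : ∀ t ∈ Icc u r, Y t = Y u + (w t - w u) + ∫ s in u..t, b s (Y s))
    (hZ_sol : ∀ t ∈ Icc u r, Z t = Z u + (w t - w u) + ∫ s in u..t, b s (Z s))
    {t : ℝ} (ht : t ∈ Icc u r) :
    Y t - Z t = ∫ s in Ioc u t, (b s (Y s) - b s (Z s)) := by
  have hIoc : Ioc u t ⊆ Icc u r := Ioc_subset_Icc_self.trans (Icc_subset_Icc le_rfl ht.2)
  have hdrift : ∀ X, ContinuousOn X (Icc u r) → IntegrableOn (fun s => b s (X s)) (Ioc u t) :=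
    fun X hX =>
      (integrableOn_comp_of_continuousOn_of_norm_le hb measurableSet_Icc hM hbM hX).mono_set hIoc
  exact sub_eq_setIntegral_Ioc_of_eq_add_integral ht.1 (hdrift Y hY_cont) (hdrift Z hZ_cont)
    (hY_sol t ht) (hZ_sol t ht) h_init

lemma mul_rpow_mul_rpow_mul_rpow {A N x β a c : ℝ} (hA : 0 ≤ A) (hx : 0 ≤ x) (hβ : 0 ≤ β)
    (ha : 0 < a) (hc : 0 < c) :
    (A * x ^ (1 / a)) ^ β * N * x ^ c = A ^ β * N * x ^ (β / a + c) := by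
  rw [Real.mul_rpow hA (by positivity), ← Real.rpow_mul hx,
    Real.rpow_add' hx (by positivity), one_div_mul_eq_div]
  ring

theorem two_solutions_closeness_general (d : ℕ) (T : ℝ)
    (b : ℝ → EuclideanSpace ℝ (Fin d) → EuclideanSpace ℝ (Fin d))
    (hb_meas : Measurable (Function.uncurry b))
    (q₁ q₂ p₁ p₂ β : ℝ) (hq₁ : 1 < q₁) (hq₂ : 1 < q₂)
    (hp₁ : 1 / p₁ + 1 / q₁ = 1) (hp₂ : 1 / p₂ + 1 / q₂ = 1) (hβ : 0 < β)
    (M₁ M₂ : ℝ → ℝ)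
    (hM₁ : MemLp M₁ (ENNReal.ofReal q₁) (volume.restrict (Icc (0 : ℝ) T)))
    (hb_bdd : ∀ t ∈ Icc (0 : ℝ) T, ∀ x, ‖b t x‖ ≤ M₁ t)
    (hM₂ : MemLp M₂ (ENNReal.ofReal q₂) (volume.restrict (Icc (0 : ℝ) T)))
    (hb_hold : ∀ t ∈ Icc (0 : ℝ) T, ∀ x y, ‖b t x - b t y‖ ≤ M₂ t * ‖x - y‖ ^ β)
    (w : ℝ → EuclideanSpace ℝ (Fin d))
    (u r : ℝ) (hu : 0 ≤ u) (hur : u ≤ r) (hr : r ≤ T)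
    (Y Z : ℝ → EuclideanSpace ℝ (Fin d))
    (hY_cont : ContinuousOn Y (Icc u r)) (hZ_cont : ContinuousOn Z (Icc u r))
    (h_init : Y u = Z u)
    (hY_sol : ∀ t ∈ Icc u r, Y t = Y u + (w t - w u) + ∫ s in u..t, b s (Y s))
    (hZ_sol : ∀ t ∈ Icc u r, Z t = Z u + (w t - w u) + ∫ s in u..t, b s (Z s)) :
    ‖Y r - Z r‖ ≤
      (2 * (eLpNorm M₁ (ENNReal.ofReal q₁) (volume.restrict (Icc (0 : ℝ) T))).toReal) ^ β *
        (eLpNorm M₂ (ENNReal.ofReal q₂) (volume.restrict (Icc (0 : ℝ) T))).toReal *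
        (r - u) ^ (β / p₁ + 1 / p₂) := by
  set N₁ := (eLpNorm M₁ (ENNReal.ofReal q₁) (volume.restrict (Icc (0 : ℝ) T))).toReal
  set N₂ := (eLpNorm M₂ (ENNReal.ofReal q₂) (volume.restrict (Icc (0 : ℝ) T))).toReal
  have hp₁_pos := one_div_pos_of_one_div_add_one_div_eq_one hq₁ hp₁
  have hsub : Icc u r ⊆ Icc 0 T := Icc_subset_Icc hu hr
  have hM₁_int : IntegrableOn M₁ (Icc u r) :=
    (hM₁.mono_measure (Measure.restrict_mono hsub le_rfl)).integrable
      (ENNReal.one_le_ofReal.2 hq₁.le)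
  have hdiff : ∀ t ∈ Icc u r, Y t - Z t = ∫ s in Ioc u t, (b s (Y s) - b s (Z s)) :=
    fun t ht => solutions_sub_eq_setIntegral_Ioc hb_meas hM₁_int (fun t ht => hb_bdd t (hsub ht))
      hY_cont hZ_cont h_init hY_sol hZ_sol ht
  have hsup : ∀ t ∈ Icc u r, ‖Y t - Z t‖ ≤ 2 * N₁ * (r - u) ^ (1 / p₁) := by
    intro t ht
    rw [hdiff t ht]
    refine (norm_setIntegral_Ioc_le_of_norm_le_mul hq₁.le hp₁ hM₁ hu ht.1 (ht.2.trans hr)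
      zero_le_two fun s hs => ?_).trans (by gcongr <;> linarith [ht.1, ht.2])
    have hs' : s ∈ Icc 0 T := hsub ⟨hs.1.le, hs.2.trans ht.2⟩
    calc ‖b s (Y s) - b s (Z s)‖ ≤ M₁ s + M₁ s :=
          (norm_sub_le _ _).trans (add_le_add (hb_bdd s hs' _) (hb_bdd s hs' _))
      _ ≤ 2 * ‖M₁ s‖ := by rw [two_mul]; gcongr <;> exact le_abs_self _
  calc ‖Y r - Z r‖ ≤ (2 * N₁ * (r - u) ^ (1 / p₁)) ^ β * N₂ * (r - u) ^ (1 / p₂) := by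
        rw [hdiff r ⟨hur, le_rfl⟩]
        refine norm_setIntegral_Ioc_le_of_norm_le_mul hq₂.le hp₂ hM₂ hu hur hr (by positivity)
          fun s hs => ?_
        have hs' : s ∈ Icc u r := ⟨hs.1.le, hs.2⟩
        calc ‖b s (Y s) - b s (Z s)‖ ≤ M₂ s * ‖Y s - Z s‖ ^ β := hb_hold s (hsub hs') _ _
          _ ≤ (2 * N₁ * (r - u) ^ (1 / p₁)) ^ β * ‖M₂ s‖ :=
              (mul_le_mul (le_abs_self _) (Real.rpow_le_rpow (norm_nonneg _) (hsup s hs') hβ.le)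
                (by positivity) (abs_nonneg _)).trans_eq (mul_comm _ _)
    _ = (2 * N₁) ^ β * N₂ * (r - u) ^ (β / p₁ + 1 / p₂) :=
        mul_rpow_mul_rpow_mul_rpow (by positivity) (sub_nonneg.2 hur) hβ.le (one_div_pos.mp hp₁_pos)
          (one_div_pos_of_one_div_add_one_div_eq_one hq₂ hp₂)

/-- Quantitative closeness of two solutions of `X_t = X_u + (w_t - w_u) + ∫_u^t b(s, X_s) ds`
on `[u, r]` with the same initial value:
`|Y_r - Z_r| ≤ (2‖M₁‖_{L^{q₁}})^β ‖M₂‖_{L^{q₂}} (r - u)^{β/p₁ + 1/p₂}`. -/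
theorem two_solutions_closeness (d : ℕ) (T : ℝ) (hT : 0 ≤ T)
    (b : ℝ → EuclideanSpace ℝ (Fin d) → EuclideanSpace ℝ (Fin d))
    (hb_meas : Measurable (Function.uncurry b))
    (q₁ q₂ p₁ p₂ β : ℝ) (hq₁ : 1 < q₁) (hq₂ : 1 < q₂)
    (hp₁ : 1 / p₁ + 1 / q₁ = 1) (hp₂ : 1 / p₂ + 1 / q₂ = 1) (hβ : 0 < β)
    (M₁ M₂ : ℝ → ℝ)
    (hM₁ : MemLp M₁ (ENNReal.ofReal q₁) (volume.restrict (Icc (0 : ℝ) T)))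
    (hb_bdd : ∀ t ∈ Icc (0 : ℝ) T, ∀ x, ‖b t x‖ ≤ M₁ t)
    (hM₂ : MemLp M₂ (ENNReal.ofReal q₂) (volume.restrict (Icc (0 : ℝ) T)))
    (hb_hold : ∀ t ∈ Icc (0 : ℝ) T, ∀ x y, ‖b t x - b t y‖ ≤ M₂ t * ‖x - y‖ ^ β)
    (w : ℝ → EuclideanSpace ℝ (Fin d)) (hw_cont : ContinuousOn w (Icc 0 T))
    (u r : ℝ) (hu : 0 ≤ u) (hur : u ≤ r) (hr : r ≤ T)
    (Y Z : ℝ → EuclideanSpace ℝ (Fin d))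
    (hY_cont : ContinuousOn Y (Icc u r)) (hZ_cont : ContinuousOn Z (Icc u r))
    (h_init : Y u = Z u)
    (hY_sol : ∀ t ∈ Icc u r, Y t = Y u + (w t - w u) + ∫ s in u..t, b s (Y s))
    (hZ_sol : ∀ t ∈ Icc u r, Z t = Z u + (w t - w u) + ∫ s in u..t, b s (Z s)) :
    ‖Y r - Z r‖ ≤
      (2 * (eLpNorm M₁ (ENNReal.ofReal q₁) (volume.restrict (Icc (0 : ℝ) T))).toReal) ^ β *
        (eLpNorm M₂ (ENNReal.ofReal q₂) (volume.restrict (Icc (0 : ℝ) T))).toReal *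
        (r - u) ^ (β / p₁ + 1 / p₂) :=
  two_solutions_closeness_general d T b hb_meas q₁ q₂ p₁ p₂ β hq₁ hq₂ hp₁ hp₂ hβ M₁ M₂ hM₁ hb_bdd
    hM₂ hb_hold w u r hu hur hr Y Z hY_cont hZ_cont h_init hY_sol hZ_sol
end
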